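/- arXiv:2407.21396 — 3 statements merged into one kernel-verified Lean document; each statement's English description precedes it below -/
import Mathlib

section
/- The quartic equation ω⁴ − gρ|k|·(1+coth(h₁|k|))/(ρ coth(h₁|k|)+ρ₁)·ω² + g²(ρ−ρ₁)k²/(ρ coth(h₁|k|)+ρ₁) = 0 in ω² has exactly the two roots ω²(k) = g(ρ−ρ₁)|k|/(ρ coth(h₁|k|)+ρ₁) and ω₁²(k) = g|k|. -/
noncomputable def Real.coth (x : ℝ) : ℝ := Real.cosh x / Real.sinh x

/-- The dispersion quartic (quadratic in `ω²`) has exactly the two roots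
`ω²(k) = g(ρ−ρ₁)|k|/(ρ coth(h₁|k|)+ρ₁)` and `ω₁²(k) = g|k|`. -/
theorem stmt_0 (g h₁ ρ ρ₁ k : ℝ) (hg : 0 < g) (hh : 0 < h₁)
    (hρ₁ : 0 < ρ₁) (hρ : ρ₁ < ρ) (hk : k ≠ 0) :
    ∀ x : ℝ,
      x ^ 2
        - g * ρ * |k| * (1 + Real.coth (h₁ * |k|)) / (ρ * Real.coth (h₁ * |k|) + ρ₁) * x
        + g ^ 2 * (ρ - ρ₁) * k ^ 2 / (ρ * Real.coth (h₁ * |k|) + ρ₁) = 0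
      ↔ (x = g * (ρ - ρ₁) * |k| / (ρ * Real.coth (h₁ * |k|) + ρ₁) ∨ x = g * |k|) := by
  intro x
  set c := Real.coth (h₁ * |k|) with hcdef
  have hkpos : 0 < |k| := abs_pos.mpr hk
  have hc : 0 < c := by
    have hs : 0 < Real.sinh (h₁ * |k|) := Real.sinh_pos_iff.mpr (by positivity)
    exact div_pos (Real.cosh_pos _) hs
  have hD : 0 < ρ * c + ρ₁ := by nlinarith
  have hD' : ρ * c + ρ₁ ≠ 0 := ne_of_gt hD
  have hk2 : |k| ^ 2 = k ^ 2 := sq_abs k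
  have key : x ^ 2 - g * ρ * |k| * (1 + c) / (ρ * c + ρ₁) * x
      + g ^ 2 * (ρ - ρ₁) * k ^ 2 / (ρ * c + ρ₁)
      = (x - g * (ρ - ρ₁) * |k| / (ρ * c + ρ₁)) * (x - g * |k|) := by
    field_simp
    linear_combination (-(g ^ 2 * (ρ - ρ₁))) * hk2
  rw [key, mul_eq_zero, sub_eq_zero, sub_eq_zero]
end

section
/- The function ω²(k) = g(ρ−ρ₁)|k|/(ρ coth(h₁|k|)+ρ₁) admits the asymptotic expansion ω²(k) = Ω₀ k² + Ω₁ k²|k| + Ω₂ k⁴ + O(|k|⁵) as k → 0, where Ω₀ = g h₁(ρ−ρ₁)/ρ, Ω₁ = −g(ρ−ρ₁)ρ₁h₁²/ρ², and Ω₂ = (g(ρ−ρ₁)h₁³/ρ)(ρ₁²/ρ² − 1/3). -/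
open Asymptotics Filter

lemma sinh_taylor_bound {x : ℝ} (hx : |x| ≤ 1) :
    |Real.sinh x - (x + x ^ 3 / 6)| ≤ |x| ^ 5 := by
  have h1 := Real.exp_bound hx (n := 5) (by norm_num)
  have h2 := Real.exp_bound (x := -x) (by rwa [abs_neg]) (n := 5) (by norm_num)
  simp only [Finset.sum_range_succ, Finset.sum_range_zero, Nat.factorial] at h1 h2
  rw [abs_neg] at h2
  norm_num at h1 h2
  rw [Real.sinh_eq, abs_le] at *
  have h5 : (0:ℝ) ≤ |x| ^ 5 := by positivity
  constructor <;> nlinarith [h1.1, h1.2, h2.1, h2.2]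

lemma cosh_taylor_bound {x : ℝ} (hx : |x| ≤ 1) :
    |Real.cosh x - (1 + x ^ 2 / 2)| ≤ |x| ^ 4 := by
  have h1 := Real.exp_bound hx (n := 4) (by norm_num)
  have h2 := Real.exp_bound (x := -x) (by rwa [abs_neg]) (n := 4) (by norm_num)
  simp only [Finset.sum_range_succ, Finset.sum_range_zero, Nat.factorial] at h1 h2
  rw [abs_neg] at h2
  norm_num at h1 h2
  rw [Real.cosh_eq, abs_le] at *
  have h4 : (0:ℝ) ≤ |x| ^ 4 := by positivity
  constructor <;> nlinarith [h1.1, h1.2, h2.1, h2.2]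

lemma dispersion_key_bound (A h₁ ρ ρ₁ Ω₀ Ω₁ Ω₂ t : ℝ)
    (hh : 0 < h₁) (hρ₁ : 0 < ρ₁) (hρ0 : 0 < ρ)
    (z2 : A * h₁ - Ω₀ * ρ = 0)
    (z3 : -(Ω₀ * ρ₁ * h₁) - Ω₁ * ρ = 0)
    (z4 : A * h₁ ^ 3 / 6 - Ω₀ * ρ * h₁ ^ 2 / 2 - Ω₁ * ρ₁ * h₁ - Ω₂ * ρ = 0)
    (ht0 : 0 < t) (ht1 : t ≤ 1) (hx1 : h₁ * t ≤ 1) :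
    |A * t * Real.sinh (h₁ * t) / (ρ * Real.cosh (h₁ * t) + ρ₁ * Real.sinh (h₁ * t))
      - (Ω₀ * t ^ 2 + Ω₁ * t ^ 3 + Ω₂ * t ^ 4)|
    ≤ ((|A| * h₁ ^ 5 + (|Ω₀| + |Ω₁| + |Ω₂|) * (ρ * h₁ ^ 4 + ρ₁ * h₁ ^ 5)
        + (|Ω₂ * ρ₁ * h₁ + Ω₁ * ρ * h₁ ^ 2 / 2 + Ω₀ * ρ₁ * h₁ ^ 3 / 6|
          + |Ω₂ * ρ * h₁ ^ 2 / 2 + Ω₁ * ρ₁ * h₁ ^ 3 / 6|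
          + |Ω₂ * ρ₁ * h₁ ^ 3 / 6|)) / ρ) * t ^ 5 := by
  have hx0 : 0 < h₁ * t := by positivity
  have hxabs : |h₁ * t| ≤ 1 := by rwa [abs_of_pos hx0]
  have hrsb0 := sinh_taylor_bound hxabs
  have hrcb0 := cosh_taylor_bound hxabs
  rw [abs_of_pos hx0] at hrsb0 hrcb0
  obtain ⟨s, hs⟩ : ∃ v, Real.sinh (h₁ * t) = v := ⟨_, rfl⟩
  obtain ⟨c, hc⟩ : ∃ v, Real.cosh (h₁ * t) = v := ⟨_, rfl⟩
  have hs0 : 0 < s := hs ▸ Real.sinh_pos_iff.mpr hx0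
  have hc1 : 1 ≤ c := hc ▸ Real.one_le_cosh _
  rw [hs] at hrsb0
  rw [hc] at hrcb0
  rw [hs, hc]
  have hrsb : |s - (h₁ * t + (h₁ * t) ^ 3 / 6)| ≤ h₁ ^ 5 * t ^ 5 := by
    refine hrsb0.trans (le_of_eq ?_); rw [mul_pow]
  have hrcb : |c - (1 + (h₁ * t) ^ 2 / 2)| ≤ h₁ ^ 4 * t ^ 4 := by
    refine hrcb0.trans (le_of_eq ?_); rw [mul_pow]
  have hDge : ρ ≤ ρ * c + ρ₁ * s := by nlinarith
  have hD0 : 0 < ρ * c + ρ₁ * s := lt_of_lt_of_le hρ0 hDge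
  have htn : ∀ m n : ℕ, n ≤ m → t ^ m ≤ t ^ n := fun m n hnm =>
    pow_le_pow_of_le_one ht0.le ht1 hnm
  have habst : |t| = t := abs_of_pos ht0
  -- abbreviations
  obtain ⟨P, hP⟩ : ∃ v, Ω₀ * t ^ 2 + Ω₁ * t ^ 3 + Ω₂ * t ^ 4 = v := ⟨_, rfl⟩
  obtain ⟨rs, hrs⟩ : ∃ v, s - (h₁ * t + (h₁ * t) ^ 3 / 6) = v := ⟨_, rfl⟩
  obtain ⟨rc, hrc⟩ : ∃ v, c - (1 + (h₁ * t) ^ 2 / 2) = v := ⟨_, rfl⟩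
  rw [hrs] at hrsb; rw [hrc] at hrcb
  have hPb : |P| ≤ (|Ω₀| + |Ω₁| + |Ω₂|) * t ^ 2 := by
    rw [← hP]
    calc |Ω₀ * t ^ 2 + Ω₁ * t ^ 3 + Ω₂ * t ^ 4|
        ≤ |Ω₀ * t ^ 2 + Ω₁ * t ^ 3| + |Ω₂ * t ^ 4| := abs_add_le _ _
      _ ≤ |Ω₀ * t ^ 2| + |Ω₁ * t ^ 3| + |Ω₂ * t ^ 4| := by gcongr; exact abs_add_le _ _
      _ = |Ω₀| * t ^ 2 + |Ω₁| * t ^ 3 + |Ω₂| * t ^ 4 := by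
          rw [abs_mul, abs_mul, abs_mul, abs_pow, abs_pow, abs_pow, habst]
      _ ≤ |Ω₀| * t ^ 2 + |Ω₁| * t ^ 2 + |Ω₂| * t ^ 2 :=
          add_le_add (add_le_add le_rfl
            (mul_le_mul_of_nonneg_left (htn 3 2 (by norm_num)) (abs_nonneg _)))
            (mul_le_mul_of_nonneg_left (htn 4 2 (by norm_num)) (abs_nonneg _))
      _ = (|Ω₀| + |Ω₁| + |Ω₂|) * t ^ 2 := by ring
  -- key algebraic identity
  have hid : A * t * s - P * (ρ * c + ρ₁ * s)
      = A * t * rs - P * (ρ * rc + ρ₁ * rs)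
        - ((Ω₂ * ρ₁ * h₁ + Ω₁ * ρ * h₁ ^ 2 / 2 + Ω₀ * ρ₁ * h₁ ^ 3 / 6) * t ^ 5
          + (Ω₂ * ρ * h₁ ^ 2 / 2 + Ω₁ * ρ₁ * h₁ ^ 3 / 6) * t ^ 6
          + (Ω₂ * ρ₁ * h₁ ^ 3 / 6) * t ^ 7) := by
    rw [← hP, ← hrs, ← hrc]
    linear_combination (t ^ 2) * z2 + t ^ 3 * z3 + t ^ 4 * z4
  -- bound the pieces
  have hb1 : |A * t * rs| ≤ |A| * h₁ ^ 5 * t ^ 5 := by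
    rw [abs_mul, abs_mul, habst]
    calc |A| * t * |rs| ≤ |A| * t * (h₁ ^ 5 * t ^ 5) := by gcongr
      _ = |A| * h₁ ^ 5 * t ^ 6 := by ring
      _ ≤ |A| * h₁ ^ 5 * t ^ 5 := by
          gcongr ?_ * ?_; exact htn 6 5 (by norm_num)
  have hinner : |ρ * rc + ρ₁ * rs| ≤ (ρ * h₁ ^ 4 + ρ₁ * h₁ ^ 5) * t ^ 4 := by
    calc |ρ * rc + ρ₁ * rs| ≤ |ρ * rc| + |ρ₁ * rs| := abs_add_le _ _
      _ = ρ * |rc| + ρ₁ * |rs| := by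
          rw [abs_mul, abs_mul, abs_of_pos hρ0, abs_of_pos hρ₁]
      _ ≤ ρ * (h₁ ^ 4 * t ^ 4) + ρ₁ * (h₁ ^ 5 * t ^ 5) := by gcongr
      _ ≤ ρ * (h₁ ^ 4 * t ^ 4) + ρ₁ * (h₁ ^ 5 * t ^ 4) :=
          add_le_add le_rfl (mul_le_mul_of_nonneg_left
            (mul_le_mul_of_nonneg_left (htn 5 4 (by norm_num)) (by positivity)) hρ₁.le)
      _ = (ρ * h₁ ^ 4 + ρ₁ * h₁ ^ 5) * t ^ 4 := by ring
  have hb2 : |P * (ρ * rc + ρ₁ * rs)|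
      ≤ (|Ω₀| + |Ω₁| + |Ω₂|) * (ρ * h₁ ^ 4 + ρ₁ * h₁ ^ 5) * t ^ 5 := by
    rw [abs_mul]
    calc |P| * |ρ * rc + ρ₁ * rs|
        ≤ ((|Ω₀| + |Ω₁| + |Ω₂|) * t ^ 2) * ((ρ * h₁ ^ 4 + ρ₁ * h₁ ^ 5) * t ^ 4) :=
          mul_le_mul hPb hinner (abs_nonneg _) (by positivity)
      _ = (|Ω₀| + |Ω₁| + |Ω₂|) * (ρ * h₁ ^ 4 + ρ₁ * h₁ ^ 5) * t ^ 6 := by ring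
      _ ≤ (|Ω₀| + |Ω₁| + |Ω₂|) * (ρ * h₁ ^ 4 + ρ₁ * h₁ ^ 5) * t ^ 5 := by
          gcongr ?_ * ?_; exact htn 6 5 (by norm_num)
  have hb3 : |(Ω₂ * ρ₁ * h₁ + Ω₁ * ρ * h₁ ^ 2 / 2 + Ω₀ * ρ₁ * h₁ ^ 3 / 6) * t ^ 5
        + (Ω₂ * ρ * h₁ ^ 2 / 2 + Ω₁ * ρ₁ * h₁ ^ 3 / 6) * t ^ 6
        + (Ω₂ * ρ₁ * h₁ ^ 3 / 6) * t ^ 7|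
      ≤ (|Ω₂ * ρ₁ * h₁ + Ω₁ * ρ * h₁ ^ 2 / 2 + Ω₀ * ρ₁ * h₁ ^ 3 / 6|
        + |Ω₂ * ρ * h₁ ^ 2 / 2 + Ω₁ * ρ₁ * h₁ ^ 3 / 6|
        + |Ω₂ * ρ₁ * h₁ ^ 3 / 6|) * t ^ 5 := by
    obtain ⟨d5, hd5⟩ : ∃ v, Ω₂ * ρ₁ * h₁ + Ω₁ * ρ * h₁ ^ 2 / 2 + Ω₀ * ρ₁ * h₁ ^ 3 / 6 = v :=
      ⟨_, rfl⟩
    obtain ⟨d6, hd6⟩ : ∃ v, Ω₂ * ρ * h₁ ^ 2 / 2 + Ω₁ * ρ₁ * h₁ ^ 3 / 6 = v := ⟨_, rfl⟩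
    obtain ⟨d7, hd7⟩ : ∃ v, Ω₂ * ρ₁ * h₁ ^ 3 / 6 = v := ⟨_, rfl⟩
    rw [hd5, hd6, hd7]
    calc |d5 * t ^ 5 + d6 * t ^ 6 + d7 * t ^ 7|
        ≤ |d5 * t ^ 5 + d6 * t ^ 6| + |d7 * t ^ 7| := abs_add_le _ _
      _ ≤ |d5 * t ^ 5| + |d6 * t ^ 6| + |d7 * t ^ 7| := by gcongr; exact abs_add_le _ _
      _ = |d5| * t ^ 5 + |d6| * t ^ 6 + |d7| * t ^ 7 := by
          rw [abs_mul, abs_mul, abs_mul, abs_pow, abs_pow, abs_pow, habst]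
      _ ≤ |d5| * t ^ 5 + |d6| * t ^ 5 + |d7| * t ^ 5 :=
          add_le_add (add_le_add le_rfl
            (mul_le_mul_of_nonneg_left (htn 6 5 (by norm_num)) (abs_nonneg _)))
            (mul_le_mul_of_nonneg_left (htn 7 5 (by norm_num)) (abs_nonneg _))
      _ = (|d5| + |d6| + |d7|) * t ^ 5 := by ring
  -- assemble
  have hN : |A * t * s - P * (ρ * c + ρ₁ * s)|
      ≤ (|A| * h₁ ^ 5 + (|Ω₀| + |Ω₁| + |Ω₂|) * (ρ * h₁ ^ 4 + ρ₁ * h₁ ^ 5)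
        + (|Ω₂ * ρ₁ * h₁ + Ω₁ * ρ * h₁ ^ 2 / 2 + Ω₀ * ρ₁ * h₁ ^ 3 / 6|
          + |Ω₂ * ρ * h₁ ^ 2 / 2 + Ω₁ * ρ₁ * h₁ ^ 3 / 6|
          + |Ω₂ * ρ₁ * h₁ ^ 3 / 6|)) * t ^ 5 := by
    rw [hid]
    refine ((abs_sub _ _).trans (add_le_add
      ((abs_sub _ _).trans (add_le_add hb1 hb2)) hb3)).trans (le_of_eq (by ring))
  have hdiff : A * t * s / (ρ * c + ρ₁ * s) - (Ω₀ * t ^ 2 + Ω₁ * t ^ 3 + Ω₂ * t ^ 4)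
      = (A * t * s - P * (ρ * c + ρ₁ * s)) / (ρ * c + ρ₁ * s) := by
    rw [hP, sub_div, mul_div_cancel_right₀ _ (ne_of_gt hD0)]
  rw [hdiff, abs_div, abs_of_pos hD0, div_mul_eq_mul_div]
  exact div_le_div₀ (by positivity) hN hρ0 hDge

/-- Small-`k` expansion of the internal-mode dispersion relation:
`ω²(k) = Ω₀k² + Ω₁k²|k| + Ω₂k⁴ + O(|k|⁵)` as `k → 0`. -/
theorem stmt_3 (g h₁ ρ ρ₁ : ℝ) (hg : 0 < g) (hh : 0 < h₁)
    (hρ₁ : 0 < ρ₁) (hρ : ρ₁ < ρ)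
    (ω2 : ℝ → ℝ)
    (hω2 : ∀ k : ℝ, k ≠ 0 →
      ω2 k = g * (ρ - ρ₁) * |k| / (ρ * Real.coth (h₁ * |k|) + ρ₁))
    (hω20 : ω2 0 = 0)
    (Ω₀ Ω₁ Ω₂ : ℝ)
    (hΩ₀ : Ω₀ = g * h₁ * (ρ - ρ₁) / ρ)
    (hΩ₁ : Ω₁ = -(g * (ρ - ρ₁) * ρ₁ * h₁ ^ 2 / ρ ^ 2))
    (hΩ₂ : Ω₂ = g * (ρ - ρ₁) * h₁ ^ 3 / ρ * (ρ₁ ^ 2 / ρ ^ 2 - 1 / 3)) :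
    (fun k : ℝ => ω2 k - (Ω₀ * k ^ 2 + Ω₁ * k ^ 2 * |k| + Ω₂ * k ^ 4))
      =O[nhds 0] fun k : ℝ => |k| ^ 5 := by
  have hρ0 : (0:ℝ) < ρ := hρ₁.trans hρ
  have hρne : ρ ≠ 0 := ne_of_gt hρ0
  obtain ⟨A, hA⟩ : ∃ v, g * (ρ - ρ₁) = v := ⟨_, rfl⟩
  have z2 : A * h₁ - Ω₀ * ρ = 0 := by rw [hΩ₀, ← hA]; field_simp; ring
  have z3 : -(Ω₀ * ρ₁ * h₁) - Ω₁ * ρ = 0 := by rw [hΩ₀, hΩ₁]; field_simp; ring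
  have z4 : A * h₁ ^ 3 / 6 - Ω₀ * ρ * h₁ ^ 2 / 2 - Ω₁ * ρ₁ * h₁ - Ω₂ * ρ = 0 := by
    rw [hΩ₀, hΩ₁, hΩ₂, ← hA]; field_simp; ring
  rw [isBigO_iff]
  refine ⟨(|A| * h₁ ^ 5 + (|Ω₀| + |Ω₁| + |Ω₂|) * (ρ * h₁ ^ 4 + ρ₁ * h₁ ^ 5)
        + (|Ω₂ * ρ₁ * h₁ + Ω₁ * ρ * h₁ ^ 2 / 2 + Ω₀ * ρ₁ * h₁ ^ 3 / 6|
          + |Ω₂ * ρ * h₁ ^ 2 / 2 + Ω₁ * ρ₁ * h₁ ^ 3 / 6|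
          + |Ω₂ * ρ₁ * h₁ ^ 3 / 6|)) / ρ, ?_⟩
  rw [Metric.eventually_nhds_iff]
  refine ⟨min 1 (1 / h₁), by positivity, fun k hk => ?_⟩
  rw [Real.dist_eq, sub_zero] at hk
  have hk1 : |k| ≤ 1 := le_of_lt (lt_of_lt_of_le hk (min_le_left _ _))
  have hk2 : h₁ * |k| ≤ 1 := by
    have h' : |k| < 1 / h₁ := lt_of_lt_of_le hk (min_le_right _ _)
    rw [lt_div_iff₀ hh] at h'
    linarith
  rw [Real.norm_eq_abs, Real.norm_eq_abs, abs_of_nonneg (pow_nonneg (abs_nonneg k) 5)]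
  rcases eq_or_ne k 0 with rfl | hk0
  · simp [hω20]
  have ht0 : 0 < |k| := abs_pos.mpr hk0
  have hs0 : 0 < Real.sinh (h₁ * |k|) := Real.sinh_pos_iff.mpr (by positivity)
  have heq : ω2 k = A * |k| * Real.sinh (h₁ * |k|)
      / (ρ * Real.cosh (h₁ * |k|) + ρ₁ * Real.sinh (h₁ * |k|)) := by
    rw [hω2 k hk0, ← hA, Real.coth]
    rw [show ρ * (Real.cosh (h₁ * |k|) / Real.sinh (h₁ * |k|)) + ρ₁
        = (ρ * Real.cosh (h₁ * |k|) + ρ₁ * Real.sinh (h₁ * |k|)) / Real.sinh (h₁ * |k|) by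
      rw [add_div, mul_div_assoc, mul_div_cancel_right₀ _ (ne_of_gt hs0)]]
    rw [div_div_eq_mul_div]
  have h2 : k ^ 2 = |k| ^ 2 := (sq_abs k).symm
  have h4 : k ^ 4 = |k| ^ 4 := by rw [show (4:ℕ) = 2 * 2 from rfl, pow_mul, pow_mul, h2]
  rw [heq, h2, h4, show Ω₁ * |k| ^ 2 * |k| = Ω₁ * |k| ^ 3 by ring]
  exact dispersion_key_bound A h₁ ρ ρ₁ Ω₀ Ω₁ Ω₂ |k| hh hρ₁ hρ0 z2 z3 z4 ht0 hk1 hk2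
end

section
/- For every Schwartz function h : ℝ → ℝ, the operator identity (a∂ₓ³ − bℋ∂ₓ²)(x·h) = (3a∂ₓ² − 2bℋ∂ₓ)h + x·(a∂ₓ³ − bℋ∂ₓ²)h holds, where ℋ is the Hilbert transform. -/
open FourierTransform

/-- The Hilbert transform: the Fourier multiplier with symbol `−i sgn(k)`. -/
noncomputable def hilbertTransform (h : ℝ → ℂ) : ℝ → ℂ :=
  (𝓕⁻ (fun k : ℝ => -Complex.I * (Real.sign k : ℂ) * (𝓕 h : ℝ → ℂ) k) : ℝ → ℂ)

open MeasureTheory Complex SchwartzMap Asymptotics Real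

/-- Multiplication by `x` as an operator on Schwartz space. -/
noncomputable def mulX : SchwartzMap ℝ ℂ →L[ℝ] SchwartzMap ℝ ℂ :=
  SchwartzMap.bilinLeftCLM (ContinuousLinearMap.mul ℝ ℂ)
    (Complex.ofRealCLM.hasTemperateGrowth)

lemma mulX_apply (f : SchwartzMap ℝ ℂ) (x : ℝ) : mulX f x = f x * x := rfl

lemma hasDerivAt_ofReal' (x : ℝ) : HasDerivAt (fun t : ℝ => (t : ℂ)) 1 x := by
  simpa using (hasDerivAt_id x).ofReal_comp

lemma norm_msign_le (k : ℝ) : ‖-Complex.I * (Real.sign k : ℂ)‖ ≤ 1 := by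
  rcases Real.sign_apply_eq k with h | h | h <;> simp [h]

lemma measurable_msign : Measurable (fun k : ℝ => -Complex.I * (Real.sign k : ℂ)) := by
  apply Measurable.const_mul
  apply Complex.measurable_ofReal.comp
  unfold Real.sign
  exact Measurable.ite measurableSet_Iio measurable_const
    (Measurable.ite measurableSet_Ioi measurable_const measurable_const)

lemma integrable_msign_mul (f : SchwartzMap ℝ ℂ) :
    Integrable (fun k : ℝ => -Complex.I * (Real.sign k : ℂ) * f k) := by
  refine f.integrable.mono ?_ ?_
  · exact (measurable_msign.aestronglyMeasurable.mul f.continuous.aestronglyMeasurable)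
  · refine Filter.Eventually.of_forall (fun k => ?_)
    rw [norm_mul]
    calc ‖-Complex.I * (Real.sign k : ℂ)‖ * ‖f k‖ ≤ 1 * ‖f k‖ := by
          gcongr; exact norm_msign_le k
      _ = ‖f k‖ := one_mul _

lemma hasDerivAt_msign_mul {Φ : ℝ → ℂ} (hΦ : Differentiable ℝ Φ)
    (h0 : Φ 0 = 0) (h1 : deriv Φ 0 = 0) (k : ℝ) :
    HasDerivAt (fun t : ℝ => -Complex.I * (Real.sign t : ℂ) * Φ t)
      (-Complex.I * (Real.sign k : ℂ) * deriv Φ k) k := by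
  rcases lt_trichotomy k 0 with hk | hk | hk
  · have hev : (fun t : ℝ => -Complex.I * (Real.sign t : ℂ) * Φ t)
        =ᶠ[nhds k] (fun t => -Complex.I * (-1 : ℂ) * Φ t) := by
      filter_upwards [Iio_mem_nhds hk] with t ht
      rw [Real.sign_of_neg ht]; push_cast; ring
    have := ((hΦ k).hasDerivAt.const_mul (-Complex.I * (-1 : ℂ))).congr_of_eventuallyEq hev
    simpa [Real.sign_of_neg hk] using this
  · subst hk
    have htarget : -Complex.I * (Real.sign (0:ℝ) : ℂ) * deriv Φ 0 = 0 := by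
      simp [Real.sign_zero]
    rw [htarget]
    have hΦo : (fun t : ℝ => Φ t) =o[nhds 0] (fun t : ℝ => t) := by
      have := (hasDerivAt_iff_isLittleO).1 ((hΦ 0).hasDerivAt)
      rw [h1] at this
      simpa [h0] using this
    have hψo : (fun t : ℝ => -Complex.I * (Real.sign t : ℂ) * Φ t) =o[nhds 0] (fun t : ℝ => t) := by
      refine IsBigO.trans_isLittleO ?_ hΦo
      refine isBigO_of_le _ (fun t => ?_)
      rw [norm_mul]
      calc ‖-Complex.I * (Real.sign t : ℂ)‖ * ‖Φ t‖ ≤ 1 * ‖Φ t‖ := by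
            gcongr; exact norm_msign_le t
        _ = ‖Φ t‖ := one_mul _
    rw [hasDerivAt_iff_isLittleO]
    simpa [Real.sign_zero, h0] using hψo
  · have hev : (fun t : ℝ => -Complex.I * (Real.sign t : ℂ) * Φ t)
        =ᶠ[nhds k] (fun t => -Complex.I * (1 : ℂ) * Φ t) := by
      filter_upwards [Ioi_mem_nhds hk] with t ht
      rw [Real.sign_of_pos ht]; push_cast; ring
    have := ((hΦ k).hasDerivAt.const_mul (-Complex.I * (1 : ℂ))).congr_of_eventuallyEq hev
    simpa [Real.sign_of_pos hk] using this

lemma F_const_mul (c : ℂ) (f : ℝ → ℂ) (w : ℝ) :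
    𝓕 (fun k => c * f k) w = c * 𝓕 f w := by
  simp only [Real.fourier_eq]
  rw [← integral_const_mul]
  congr 1; ext v
  simp only [Circle.smul_def, smul_eq_mul]; ring

lemma Finv_const_mul (c : ℂ) (f : ℝ → ℂ) (w : ℝ) :
    𝓕⁻ (fun k => c * f k) w = c * 𝓕⁻ f w := by
  rw [Real.fourierInv_eq_fourier_neg,
    Real.fourierInv_eq_fourier_neg, F_const_mul]

lemma Finv_add {f g : ℝ → ℂ} (hf : Integrable f) (hg : Integrable g) (w : ℝ) :
    𝓕⁻ (fun k => f k + g k) w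
      = 𝓕⁻ f w + 𝓕⁻ g w := by
  have : (fun k => f k + g k) = f + g := rfl
  rw [this, Real.fourierInv_eq_fourier_neg,
    Real.fourierInv_eq_fourier_neg, Real.fourierInv_eq_fourier_neg]
  rw [show 𝓕 (f + g) = 𝓕 f + 𝓕 g from
    VectorFourier.fourierIntegral_add Real.continuous_fourierChar continuous_inner hf hg]
  rfl

lemma coe_mulX (g : SchwartzMap ℝ ℂ) : (fun x : ℝ => x • g x) = ⇑(mulX g) := by
  funext x; rw [mulX_apply, real_smul, mul_comm]

lemma schwartz_deriv (F : SchwartzMap ℝ ℂ) :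
    deriv ⇑F = ⇑(SchwartzMap.derivCLM ℝ ℂ F) :=
  funext fun x => (SchwartzMap.derivCLM_apply ℝ F x).symm

/-- Key commutation: the Hilbert transform commutes with multiplication by `x` on
functions whose Fourier transform vanishes to first order at the origin. -/
lemma hilbert_mulX (g : SchwartzMap ℝ ℂ) (h0 : 𝓕 ⇑g 0 = 0)
    (h1 : deriv (𝓕 ⇑g) 0 = 0) (x : ℝ) :
    hilbertTransform ⇑(mulX g) x = (x : ℂ) * hilbertTransform ⇑g x := by
  set G : SchwartzMap ℝ ℂ := fourierTransformCLM ℝ g with hG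
  set Φ : ℝ → ℂ := 𝓕 ⇑g with hΦ
  have Φdiff : Differentiable ℝ Φ := G.differentiable
  set G' : SchwartzMap ℝ ℂ := SchwartzMap.derivCLM ℝ ℂ G with hG'
  have derivΦ : deriv Φ = ⇑G' :=
    funext fun k => (SchwartzMap.derivCLM_apply ℝ G k).symm
  set ψ : ℝ → ℂ := fun k => -Complex.I * (Real.sign k : ℂ) * Φ k with hψ
  have ψint : Integrable ψ := integrable_msign_mul G
  have hd : ∀ k, HasDerivAt ψ (-Complex.I * (Real.sign k : ℂ) * deriv Φ k) k :=
    fun k => hasDerivAt_msign_mul Φdiff h0 h1 k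
  have ψdiff : Differentiable ℝ ψ := fun k => (hd k).differentiableAt
  have derivψ : deriv ψ = fun k => -Complex.I * (Real.sign k : ℂ) * deriv Φ k :=
    funext fun k => (hd k).deriv
  have derivψ_int : Integrable (deriv ψ) := by
    rw [derivψ, derivΦ]; exact integrable_msign_mul G'
  have hxg_int : Integrable (fun x : ℝ => x • g x) := by
    rw [coe_mulX]; exact (mulX g).integrable
  have derivΦ2 : deriv Φ = fun k => (-2 * π * Complex.I)
      * 𝓕 ⇑(mulX g) k := by
    rw [hΦ, Real.deriv_fourier g.integrable hxg_int]
    funext k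
    rw [← F_const_mul]
    refine congrArg (fun F : ℝ → ℂ => (𝓕 F : ℝ → ℂ) k) ?_
    funext y
    rw [smul_eq_mul, mulX_apply]
    ring
  have key : (fun k => -Complex.I * (Real.sign k : ℂ) * 𝓕 ⇑(mulX g) k)
      = fun k => (-1 / (2 * π * Complex.I)) * deriv ψ k := by
    funext k
    rw [derivψ]
    rw [derivΦ2]
    have hπ : (π : ℂ) ≠ 0 := by exact_mod_cast Real.pi_ne_zero
    field_simp
  show 𝓕⁻
      (fun k => -Complex.I * (Real.sign k : ℂ) * 𝓕 ⇑(mulX g) k) x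
      = (x : ℂ) * hilbertTransform ⇑g x
  rw [key, Finv_const_mul, Real.fourierInv_eq_fourier_neg,
    Real.fourier_deriv ψint ψdiff derivψ_int]
  have hval : 𝓕 ψ (-x) = hilbertTransform ⇑g x := by
    rw [← Real.fourierInv_eq_fourier_neg]; rfl
  simp only [smul_eq_mul]
  rw [hval]
  have hπ : (π : ℂ) ≠ 0 := by exact_mod_cast Real.pi_ne_zero
  push_cast
  field_simp

lemma derivCLM_mulX (f : SchwartzMap ℝ ℂ) :
    SchwartzMap.derivCLM ℝ ℂ (mulX f) = f + mulX (SchwartzMap.derivCLM ℝ ℂ f) := by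
  ext x
  rw [SchwartzMap.derivCLM_apply]
  have hx : HasDerivAt (⇑(mulX f)) (deriv (⇑f) x * x + f x * 1) x := by
    have h1 : HasDerivAt (⇑f) (deriv (⇑f) x) x := (f.differentiable x).hasDerivAt
    have := h1.mul (hasDerivAt_ofReal' x)
    exact this
  rw [hx.deriv]
  simp only [SchwartzMap.add_apply, mulX_apply, SchwartzMap.derivCLM_apply]
  ring

/-- Commutator identity between multiplication by `x` and the linear higher-order
Benjamin–Ono operator: `(a∂ₓ³ − bℋ∂ₓ²)(x·h) = (3a∂ₓ² − 2bℋ∂ₓ)h + x·(a∂ₓ³ − bℋ∂ₓ²)h`. -/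
theorem stmt_5 (a b : ℝ) (h : SchwartzMap ℝ ℂ) (hreal : ∀ x : ℝ, (h x).im = 0) :
    ∀ x : ℝ,
      (a : ℂ) * iteratedDeriv 3 (fun y : ℝ => (y : ℂ) * h y) x
        - (b : ℂ) * hilbertTransform (iteratedDeriv 2 (fun y : ℝ => (y : ℂ) * h y)) x
      = (3 * a : ℂ) * iteratedDeriv 2 (⇑h) x
        - (2 * b : ℂ) * hilbertTransform (deriv (⇑h)) x
        + (x : ℂ) * ((a : ℂ) * iteratedDeriv 3 (⇑h) x
            - (b : ℂ) * hilbertTransform (iteratedDeriv 2 (⇑h)) x) := by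
  intro x
  set D : SchwartzMap ℝ ℂ →L[ℝ] SchwartzMap ℝ ℂ := SchwartzMap.derivCLM ℝ ℂ with hDdef
  set hD : SchwartzMap ℝ ℂ := D h with hD_def
  set hDD : SchwartzMap ℝ ℂ := D hD with hDD_def
  set hDDD : SchwartzMap ℝ ℂ := D hDD with hDDD_def
  -- rewrite `x * h` as a Schwartz map
  have e_fun : (fun y : ℝ => (y : ℂ) * h y) = ⇑(mulX h) := by
    funext y; rw [mulX_apply, mul_comm]
  -- iterated derivative identities
  have it1 : ∀ F : SchwartzMap ℝ ℂ, deriv ⇑F = ⇑(D F) := fun F => schwartz_deriv F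
  have it2 : ∀ F : SchwartzMap ℝ ℂ, iteratedDeriv 2 ⇑F = ⇑(D (D F)) := by
    intro F
    rw [show (2:ℕ) = 1+1 from rfl, iteratedDeriv_succ, iteratedDeriv_one, it1, it1]
  have it3 : ∀ F : SchwartzMap ℝ ℂ, iteratedDeriv 3 ⇑F = ⇑(D (D (D F))) := by
    intro F
    rw [show (3:ℕ) = 2+1 from rfl, iteratedDeriv_succ, it2, it1]
  have D1 : D (mulX h) = h + mulX hD := derivCLM_mulX h
  have D2 : D (D (mulX h)) = hD + (hD + mulX hDD) := by
    rw [D1, map_add, derivCLM_mulX]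
  have D3 : D (D (D (mulX h))) = hDD + (hDD + (hDD + mulX hDDD)) := by
    rw [D2, map_add, map_add, derivCLM_mulX]
  -- Fourier transform facts for hDD
  have coehD : ⇑hD = deriv ⇑h := (it1 h).symm
  have coehDD : ⇑hDD = deriv ⇑hD := (it1 hD).symm
  have FhD_eq : 𝓕 ⇑hD
      = fun k : ℝ => (2 * π * Complex.I * k) • 𝓕 ⇑h k := by
    rw [coehD]
    exact Real.fourier_deriv h.integrable h.differentiable
      (by rw [← coehD]; exact hD.integrable)
  have FhDD_eq : 𝓕 ⇑hDD
      = fun k : ℝ => (2 * π * Complex.I * k) • 𝓕 ⇑hD k := by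
    rw [coehDD]
    exact Real.fourier_deriv hD.integrable hD.differentiable
      (by rw [← coehDD]; exact hDD.integrable)
  have FhD0 : 𝓕 ⇑hD 0 = 0 := by rw [FhD_eq]; simp
  have h0 : 𝓕 ⇑hDD 0 = 0 := by rw [FhDD_eq]; simp
  have h1 : deriv (𝓕 ⇑hDD) 0 = 0 := by
    rw [FhDD_eq]
    have hΨ : 𝓕 ⇑hD = ⇑(fourierTransformCLM ℝ hD) := rfl
    have hA : HasDerivAt (fun k : ℝ => ((2 * π * Complex.I : ℂ) * (k : ℂ)))
        (2 * π * Complex.I) 0 := by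
      simpa using (hasDerivAt_ofReal' 0).const_mul (2 * π * Complex.I : ℂ)
    have hB : HasDerivAt (𝓕 ⇑hD)
        (deriv (𝓕 ⇑hD) 0) 0 := by
      rw [hΨ]
      exact ((fourierTransformCLM ℝ hD).differentiable 0).hasDerivAt
    have hAB := hA.mul hB
    have heq : (fun k : ℝ => (2 * π * Complex.I * (k:ℂ)) • 𝓕 ⇑hD k)
        = fun k : ℝ => ((2 * π * Complex.I : ℂ) * (k : ℂ)) * 𝓕 ⇑hD k := by
      funext k; rw [smul_eq_mul]
    rw [heq, HasDerivAt.deriv (f := fun k : ℝ => (2 * π * Complex.I * (k:ℂ)) * 𝓕 ⇑hD k) hAB]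
    simp [FhD0]
  -- linearity of the Hilbert transform over the decomposition
  have HL : hilbertTransform ⇑(hD + (hD + mulX hDD)) x
      = hilbertTransform ⇑hD x
        + (hilbertTransform ⇑hD x + hilbertTransform ⇑(mulX hDD) x) := by
    show (𝓕⁻ (_ : ℝ → ℂ) : ℝ → ℂ) x = _
    have split : (fun k : ℝ => -Complex.I * (Real.sign k : ℂ)
          * 𝓕 ⇑(hD + (hD + mulX hDD)) k)
        = fun k : ℝ => (-Complex.I * (Real.sign k : ℂ) * 𝓕 ⇑hD k)
            + ((-Complex.I * (Real.sign k : ℂ) * 𝓕 ⇑hD k)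
              + (-Complex.I * (Real.sign k : ℂ) * 𝓕 ⇑(mulX hDD) k)) := by
      funext k
      have : 𝓕 ⇑(hD + (hD + mulX hDD)) k
          = 𝓕 ⇑hD k
            + (𝓕 ⇑hD k + 𝓕 ⇑(mulX hDD) k) := by
        show (fourierTransformCLM ℝ (hD + (hD + mulX hDD))) k
          = (fourierTransformCLM ℝ hD) k
            + ((fourierTransformCLM ℝ hD) k + (fourierTransformCLM ℝ (mulX hDD)) k)
        simp only [map_add, SchwartzMap.add_apply]
      rw [this]; ring
    have intA : Integrable (fun k : ℝ => -Complex.I * (Real.sign k : ℂ)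
        * 𝓕 ⇑hD k) := integrable_msign_mul (fourierTransformCLM ℝ hD)
    have intC : Integrable (fun k : ℝ => -Complex.I * (Real.sign k : ℂ)
        * 𝓕 ⇑(mulX hDD) k) :=
      integrable_msign_mul (fourierTransformCLM ℝ (mulX hDD))
    have step1 : 𝓕⁻
        (fun k : ℝ => (-Complex.I * (Real.sign k : ℂ) * 𝓕 ⇑hD k)
          + ((-Complex.I * (Real.sign k : ℂ) * 𝓕 ⇑hD k)
            + (-Complex.I * (Real.sign k : ℂ) * 𝓕 ⇑(mulX hDD) k))) x
        = 𝓕⁻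
            (fun k : ℝ => -Complex.I * (Real.sign k : ℂ) * 𝓕 ⇑hD k) x
          + 𝓕⁻
            (fun k : ℝ => (-Complex.I * (Real.sign k : ℂ) * 𝓕 ⇑hD k)
              + (-Complex.I * (Real.sign k : ℂ) * 𝓕 ⇑(mulX hDD) k)) x :=
      Finv_add intA (by exact intA.add intC) x
    have step2 : 𝓕⁻
        (fun k : ℝ => (-Complex.I * (Real.sign k : ℂ) * 𝓕 ⇑hD k)
          + (-Complex.I * (Real.sign k : ℂ) * 𝓕 ⇑(mulX hDD) k)) x
        = 𝓕⁻
            (fun k : ℝ => -Complex.I * (Real.sign k : ℂ) * 𝓕 ⇑hD k) x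
          + 𝓕⁻
            (fun k : ℝ => -Complex.I * (Real.sign k : ℂ)
              * 𝓕 ⇑(mulX hDD) k) x :=
      Finv_add intA intC x
    rw [split, step1, step2]
    rfl
  -- put everything together
  rw [e_fun, it2 (mulX h), it3 (mulX h), it2 h, it3 h, it1 h, ← hD_def, ← hDD_def,
    ← hDDD_def, D3, D2, HL, hilbert_mulX hDD h0 h1 x]
  simp only [SchwartzMap.add_apply, mulX_apply]
  ring
end
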